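/- The set R₁ of colours of edges of E₁ satisfies |R₁| ≥ αn. -/

import Mathlib

/-
A multigraph on vertex type `V` is given by an edge type `E` with two endpoint
maps `fst snd : E → V` (no loops: `fst e ≠ snd e`); parallel edges are allowed
since distinct elements of `E` may have the same endpoints.  A colouring
`col : E → C` by a set `C` of `n` colours is proper if any two distinct edges
sharing a vertex get distinct colours.
-/

attribute [local instance] Classical.propDecidable

/-- The set of endpoints of an edge. -/
def endpts {V E : Type*} [DecidableEq V] (fst snd : E → V) (e : E) : Finset V :=
  {fst e, snd e}

/-- A set of edges is a rainbow matching: pairwise vertex-disjoint edges with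
pairwise distinct colours. -/
def IsRainbowMatching {V E C : Type*} [DecidableEq V] (fst snd : E → V) (col : E → C)
    (S : Finset E) : Prop :=
  (∀ e ∈ S, ∀ f ∈ S, e ≠ f → endpts fst snd e ∩ endpts fst snd f = ∅) ∧
  (∀ e ∈ S, ∀ f ∈ S, col e = col f → e = f)

/-- `V(M)`: the set of vertices covered by a set of edges `M`. -/
def mVerts {V E : Type*} [DecidableEq V] (fst snd : E → V) (M : Finset E) : Finset V :=
  M.biUnion (endpts fst snd)

/-- The set of colours used by a set of edges `M`. -/
def mCols {E C : Type*} [DecidableEq C] (col : E → C) (M : Finset E) : Finset C :=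
  M.image col

/-- `C₀`: the set of colours not used by `M`. -/
def C0 {E C : Type*} [Fintype C] [DecidableEq C] (col : E → C) (M : Finset E) : Finset C :=
  Finset.univ \ mCols col M

/-- An edge is external if one endpoint is in `V(M)` and the other is outside `V(M)`. -/
def IsExternal {V E : Type*} [DecidableEq V] (fst snd : E → V) (M : Finset E) (e : E) : Prop :=
  (fst e ∈ mVerts fst snd M ∧ snd e ∉ mVerts fst snd M) ∨
  (fst e ∉ mVerts fst snd M ∧ snd e ∈ mVerts fst snd M)

/-- The number of external `C₀`-edges incident to a vertex `v`. -/
noncomputable def extC0deg {V E C : Type*} [DecidableEq V] [Fintype E] [Fintype C]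
    [DecidableEq C] (fst snd : E → V) (col : E → C) (M : Finset E) (v : V) : ℕ :=
  (Finset.univ.filter fun f : E =>
    IsExternal fst snd M f ∧ col f ∈ C0 col M ∧ v ∈ endpts fst snd f).card

/-- `E₀`: the edges of `M` having an endpoint (a possible tail) incident to at least
`α|C₀|` external `C₀`-edges. -/
noncomputable def E0 {V E C : Type*} [DecidableEq V] [Fintype E] [Fintype C] [DecidableEq C]
    (fst snd : E → V) (col : E → C) (M : Finset E) (α : ℝ) : Finset E :=
  M.filter fun e => ∃ v ∈ endpts fst snd e,
    α * ((C0 col M).card : ℝ) ≤ (extC0deg fst snd col M v : ℝ)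

/-- `F`: the set of flexible colours, i.e. the colours of the edges of `E₀`. -/
noncomputable def Fcols {V E C : Type*} [DecidableEq V] [Fintype E] [Fintype C] [DecidableEq C]
    (fst snd : E → V) (col : E → C) (M : Finset E) (α : ℝ) : Finset C :=
  mCols col (E0 fst snd col M α)

/-- A good external edge: an external edge `e` whose colour lies in `F` such that the
edge `m_{c(e)}` of `M` of the same colour is incident to at least `α|C₀|/2` external
`C₀`-edges sharing no endpoint with `e`. -/
noncomputable def IsGood {V E C : Type*} [DecidableEq V] [Fintype E] [Fintype C] [DecidableEq C]
    (fst snd : E → V) (col : E → C) (M : Finset E) (α : ℝ) (e : E) : Prop :=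
  IsExternal fst snd M e ∧ col e ∈ Fcols fst snd col M α ∧
  ∃ g ∈ M, col g = col e ∧
    α * ((C0 col M).card : ℝ) / 2 ≤
      ((Finset.univ.filter fun f : E => IsExternal fst snd M f ∧ col f ∈ C0 col M ∧
        (endpts fst snd f ∩ endpts fst snd g).Nonempty ∧
        endpts fst snd f ∩ endpts fst snd e = ∅).card : ℝ)

/-- The number of good external `F`-edges incident to a vertex `v`. -/
noncomputable def goodDeg {V E C : Type*} [DecidableEq V] [Fintype E] [Fintype C] [DecidableEq C]
    (fst snd : E → V) (col : E → C) (M : Finset E) (α : ℝ) (v : V) : ℕ :=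
  (Finset.univ.filter fun f : E => IsGood fst snd col M α f ∧ v ∈ endpts fst snd f).card

/-- `E₁`: the edges of `M` having an endpoint (a possible tail) incident to at least
`α|F|` good external `F`-edges. -/
noncomputable def E1 {V E C : Type*} [DecidableEq V] [Fintype E] [Fintype C] [DecidableEq C]
    (fst snd : E → V) (col : E → C) (M : Finset E) (α : ℝ) : Finset E :=
  M.filter fun e => ∃ v ∈ endpts fst snd e,
    α * ((Fcols fst snd col M α).card : ℝ) ≤ (goodDeg fst snd col M α v : ℝ)

/-- Given a choice `tl` of tail for each edge, the corresponding head. -/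
def hdOf {V E : Type*} [DecidableEq V] (fst snd : E → V) (tl : E → V) (e : E) : V :=
  if tl e = fst e then snd e else fst e

/-- The endpoint of the edge `f` other than `v` (for `v` an endpoint of `f`). -/
def other {V E : Type*} [DecidableEq V] (fst snd : E → V) (v : V) (f : E) : V :=
  if fst f = v then snd f else fst f

/-- The condition for a vertex `v` to be a possible tail at step `i > 1` of the
reachability algorithm: for some `0 < j < i`, the number of `R_j`-edges `v u` with
`u ∈ V₀ ∪ V₁ ∪ ⋯ ∪ V_{i-1}` is at least `α|R_j|`. -/
noncomputable def reachCond {V E C : Type*} [DecidableEq V] [Fintype V] [Fintype E] [Fintype C]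
    [DecidableEq C] (fst snd : E → V) (col : E → C) (M : Finset E)
    (Vs : ℕ → Finset V) (Rs : ℕ → Finset C) (α : ℝ) (i : ℕ) (v : V) : Prop :=
  ∃ j ∈ Finset.Ioo 0 i, α * ((Rs j).card : ℝ) ≤
    ((Finset.univ.filter fun f : E => v ∈ endpts fst snd f ∧ col f ∈ Rs j ∧
      other fst snd v f ∈ (Finset.univ \ mVerts fst snd M) ∪ (Finset.Ioo 0 i).biUnion Vs).card : ℝ)

/-- The set `T(S)` of twins (matching partners under `M`) of the vertices of `S`. -/
def twins {V E : Type*} [DecidableEq V] (fst snd : E → V) (M : Finset E) (S : Finset V) :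
    Finset V :=
  M.biUnion fun g => (if fst g ∈ S then {snd g} else ∅) ∪ (if snd g ∈ S then {fst g} else ∅)


/-!
A colour class is a matching, so at most `|M|` of its edges lie inside `V(M)`. By maximality of
`M`, a colour of `C₀` has no edge avoiding `V(M)`, and a flexible colour `c` has at most one: an
edge of colour `c` avoiding `V(M)` and disjoint from an external `C₀`-edge at the tail of `m_c`
could replace `m_c`, after which that `C₀`-edge extends the matching. Hence each of these colours
has about `(1 + ε)n - |M| ≥ εn` external edges, and for a flexible colour at most `4/α` of them are
bad, since each bad edge meets half of the `≥ α|C₀|` external `C₀`-edges at the tail of `m_c`,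
each of which meets at most two edges of colour `c`.

Double counting external edges at their endpoints in `V(M)`, where every vertex has degree at most
the number of colours involved, shows that about `(1 + ε)n - |M| - 2α|M|` vertices of `V(M)` are
tails. For `C₀` this makes `F` nonempty; for the good `F`-edges it gives `2|E₁| ≥ 2αn`, and
`|R₁| = |E₁|` because `M` is rainbow.
-/

open Finset

section Endpoints

variable {V E : Type*} [DecidableEq V] {fst snd : E → V}

lemma mem_endpts {e : E} {x : V} : x ∈ endpts fst snd e ↔ x = fst e ∨ x = snd e := by
  simp [endpts]

lemma card_endpts_le (e : E) : #(endpts fst snd e) ≤ 2 := card_le_two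

lemma card_endpts {e : E} (he : fst e ≠ snd e) : #(endpts fst snd e) = 2 := card_pair he

lemma endpts_subset_mVerts {M : Finset E} {g : E} (hg : g ∈ M) :
    endpts fst snd g ⊆ mVerts fst snd M :=
  subset_biUnion_of_mem _ hg

lemma card_mVerts_le (M : Finset E) : #(mVerts fst snd M) ≤ 2 * #M :=
  (card_biUnion_le_card_mul _ _ 2 fun e _ => card_endpts_le e).trans_eq (mul_comm _ _)

lemma card_filter_mVerts_le (M : Finset E) (P : V → Prop) [DecidablePred P] :
    #{v ∈ mVerts fst snd M | P v} ≤ 2 * #{e ∈ M | ∃ v ∈ endpts fst snd e, P v} := by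
  have hsub : {v ∈ mVerts fst snd M | P v} ⊆
      {e ∈ M | ∃ v ∈ endpts fst snd e, P v}.biUnion (endpts fst snd) := by
    intro v hv
    obtain ⟨hvM, hP⟩ := mem_filter.1 hv
    obtain ⟨g, hg, hvg⟩ := mem_biUnion.1 hvM
    exact mem_biUnion.2 ⟨g, mem_filter.2 ⟨hg, v, hvg, hP⟩, hvg⟩
  exact (card_le_card hsub).trans <|
    (card_biUnion_le_card_mul _ _ 2 fun e _ => card_endpts_le e).trans_eq (mul_comm _ _)

lemma IsExternal.exists_endpts_eq {M : Finset E} {e : E} (he : IsExternal fst snd M e) :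
    ∃ x y, endpts fst snd e = {x, y} ∧ x ∈ mVerts fst snd M ∧ y ∉ mVerts fst snd M := by
  rcases he with ⟨h₁, h₂⟩ | ⟨h₁, h₂⟩
  · exact ⟨_, _, rfl, h₁, h₂⟩
  · exact ⟨_, _, pair_comm _ _, h₂, h₁⟩

lemma IsExternal.exists_mem_mVerts {M : Finset E} {e : E} (he : IsExternal fst snd M e) :
    ∃ v ∈ mVerts fst snd M, v ∈ endpts fst snd e := by
  obtain ⟨x, y, hxy, hx, -⟩ := he.exists_endpts_eq
  exact ⟨x, hx, by simp [hxy]⟩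

end Endpoints

section Colouring

variable {V E C : Type*} [DecidableEq V] {fst snd : E → V} {col : E → C}

def IsProperColouring (fst snd : E → V) (col : E → C) : Prop :=
  ∀ e f : E, e ≠ f → (endpts fst snd e ∩ endpts fst snd f).Nonempty → col e ≠ col f

namespace IsProperColouring

lemma inter_eq_empty (hcol : IsProperColouring fst snd col) {e f : E} (hne : e ≠ f)
    (hef : col e = col f) : endpts fst snd e ∩ endpts fst snd f = ∅ :=
  not_nonempty_iff_eq_empty.1 fun h => hcol e f hne h hef

lemma card_le_of_mem_endpts (hcol : IsProperColouring fst snd col) (v : V) {S : Finset E}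
    {D : Finset C} (h : ∀ e ∈ S, col e ∈ D ∧ v ∈ endpts fst snd e) : #S ≤ #D :=
  card_le_card_of_injOn col (fun e he => (h e he).1) fun e he f hf hef =>
    by_contra fun hne => hcol e f hne ⟨v, mem_inter.2 ⟨(h e he).2, (h f hf).2⟩⟩ hef

lemma card_le_one_of_mem_endpts (hcol : IsProperColouring fst snd col) (v : V) (c : C)
    {S : Finset E} (h : ∀ e ∈ S, col e = c ∧ v ∈ endpts fst snd e) : #S ≤ 1 :=
  (hcol.card_le_of_mem_endpts v (D := {c}) fun e he =>
    ⟨mem_singleton.2 (h e he).1, (h e he).2⟩).trans_eq (card_singleton c)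

lemma card_le_two_of_meet (hcol : IsProperColouring fst snd col) (f : E) (c : C)
    {S : Finset E} (h : ∀ e ∈ S, col e = c ∧ (endpts fst snd e ∩ endpts fst snd f).Nonempty) :
    #S ≤ 2 := by
  have hsub : S ⊆ (endpts fst snd f).biUnion fun v => {e ∈ S | v ∈ endpts fst snd e} := by
    intro e he
    obtain ⟨v, hv⟩ := (h e he).2
    exact mem_biUnion.2 ⟨v, (mem_inter.1 hv).2, mem_filter.2 ⟨he, (mem_inter.1 hv).1⟩⟩
  calc #S ≤ #(endpts fst snd f) * 1 := (card_le_card hsub).trans <|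
        card_biUnion_le_card_mul _ _ 1 fun v _ => hcol.card_le_one_of_mem_endpts v c
          fun e he => ⟨(h e (mem_filter.1 he).1).1, (mem_filter.1 he).2⟩
    _ ≤ 2 := by simpa using card_endpts_le f

lemma card_filter_subset_mVerts_le (hcol : IsProperColouring fst snd col)
    (hloop : ∀ e : E, fst e ≠ snd e) [Fintype E] [DecidableEq C] (M : Finset E) (c : C) :
    #{e | col e = c ∧ endpts fst snd e ⊆ mVerts fst snd M} ≤ #M := by
  set S : Finset E := {e | col e = c ∧ endpts fst snd e ⊆ mVerts fst snd M}
  have hdisj : (S : Set E).PairwiseDisjoint (endpts fst snd) := fun e he f hf hne =>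
    disjoint_iff_inter_eq_empty.2 <|
      hcol.inter_eq_empty hne ((mem_filter.1 he).2.1.trans (mem_filter.1 hf).2.1.symm)
  have hunion : 2 * #S = #(S.biUnion (endpts fst snd)) := by
    rw [card_biUnion hdisj, sum_congr rfl fun e _ => card_endpts (hloop e), sum_const,
      smul_eq_mul, mul_comm]
  have hsub : S.biUnion (endpts fst snd) ⊆ mVerts fst snd M :=
    biUnion_subset.2 fun e he => (mem_filter.1 he).2.2
  have := (card_le_card hsub).trans (card_mVerts_le M)
  omega

end IsProperColouring

end Colouring

section Matching

variable {V E C : Type*} [DecidableEq V] {fst snd : E → V} {col : E → C} {M : Finset E}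

lemma IsRainbowMatching.subset (hM : IsRainbowMatching fst snd col M) {S : Finset E}
    (hS : S ⊆ M) : IsRainbowMatching fst snd col S :=
  ⟨fun e he f hf => hM.1 e (hS he) f (hS hf), fun e he f hf => hM.2 e (hS he) f (hS hf)⟩

variable [DecidableEq C]

lemma mem_mCols_of_mem {e : E} (he : e ∈ M) : col e ∈ mCols col M := mem_image_of_mem col he

lemma mem_C0 [Fintype C] {c : C} : c ∈ C0 col M ↔ c ∉ mCols col M := by simp [C0]

lemma card_insert_of_col_notMem {e : E} (hc : col e ∉ mCols col M) :
    #(insert e M) = #M + 1 :=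
  card_insert_of_notMem fun he => hc (mem_mCols_of_mem he)

namespace IsRainbowMatching

lemma insert (hM : IsRainbowMatching fst snd col M) {e : E} (hc : col e ∉ mCols col M)
    (hd : ∀ g ∈ M, endpts fst snd e ∩ endpts fst snd g = ∅) :
    IsRainbowMatching fst snd col (insert e M) := by
  constructor
  · intro a ha b hb hab
    rcases mem_insert.1 ha with rfl | ha' <;> rcases mem_insert.1 hb with rfl | hb'
    · exact absurd rfl hab
    · exact hd b hb'
    · rw [inter_comm]; exact hd a ha'
    · exact hM.1 a ha' b hb' hab
  · intro a ha b hb hab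
    rcases mem_insert.1 ha with rfl | ha' <;> rcases mem_insert.1 hb with rfl | hb'
    · rfl
    · exact absurd (hab ▸ mem_mCols_of_mem hb') hc
    · exact absurd (hab ▸ mem_mCols_of_mem ha') hc
    · exact hM.2 a ha' b hb' hab

lemma card_mCols (hM : IsRainbowMatching fst snd col M) : #(mCols col M) = #M :=
  card_image_of_injOn fun e he f hf => hM.2 e he f hf

lemma card_C0_add [Fintype C] (hM : IsRainbowMatching fst snd col M) :
    #(C0 col M) + #M = Fintype.card C := by
  rw [← hM.card_mCols, C0, card_univ_sdiff]
  exact Nat.sub_add_cancel (card_le_univ _)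

end IsRainbowMatching

def IsMaximumRainbowMatching (fst snd : E → V) (col : E → C) (M : Finset E) : Prop :=
  IsRainbowMatching fst snd col M ∧ ∀ S : Finset E, IsRainbowMatching fst snd col S → #S ≤ #M

namespace IsMaximumRainbowMatching

lemma not_disjoint_mVerts (hmax : IsMaximumRainbowMatching fst snd col M) {e : E}
    (hc : col e ∉ mCols col M) : ¬ Disjoint (endpts fst snd e) (mVerts fst snd M) := by
  intro hd
  have := hmax.2 _ <| hmax.1.insert hc fun g hg =>
    disjoint_iff_inter_eq_empty.1 (hd.mono_right (endpts_subset_mVerts hg))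
  rw [card_insert_of_col_notMem hc] at this
  omega

/-- Otherwise `M - g + e₀ + f` would be a larger rainbow matching. -/
lemma inter_nonempty_of_swap (hmax : IsMaximumRainbowMatching fst snd col M) {g e₀ f : E}
    (hg : g ∈ M) (he₀ : col e₀ = col g) (he₀M : Disjoint (endpts fst snd e₀) (mVerts fst snd M))
    (hf : col f ∉ mCols col M) (hfg : endpts fst snd f ∩ mVerts fst snd M ⊆ endpts fst snd g) :
    (endpts fst snd f ∩ endpts fst snd e₀).Nonempty := by
  rw [nonempty_iff_ne_empty]
  intro hfe
  have hc₀ : col e₀ ∉ mCols col (M.erase g) := fun h => by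
    obtain ⟨h, hh, hhc⟩ := mem_image.1 h
    exact ne_of_mem_erase hh (hmax.1.2 h (mem_of_mem_erase hh) g hg (hhc.trans he₀))
  have hM' := (hmax.1.subset (erase_subset g M)).insert hc₀ fun h hh =>
    disjoint_iff_inter_eq_empty.1 (he₀M.mono_right (endpts_subset_mVerts (mem_of_mem_erase hh)))
  have hcf : col f ∉ mCols col (insert e₀ (M.erase g)) := fun h => hf <| by
    obtain ⟨h, hh, hhc⟩ := mem_image.1 h
    rcases mem_insert.1 hh with rfl | hh
    · exact hhc ▸ he₀ ▸ mem_mCols_of_mem hg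
    · exact hhc ▸ mem_mCols_of_mem (mem_of_mem_erase hh)
  have hdf : ∀ h ∈ insert e₀ (M.erase g), endpts fst snd f ∩ endpts fst snd h = ∅ := by
    intro h hh
    rcases mem_insert.1 hh with rfl | hh
    · exact hfe
    refine eq_empty_of_forall_notMem fun x hx => ?_
    have hxg := hfg (mem_inter.2 ⟨(mem_inter.1 hx).1,
      endpts_subset_mVerts (mem_of_mem_erase hh) (mem_inter.1 hx).2⟩)
    have hgh := hmax.1.1 g hg h (mem_of_mem_erase hh) (ne_of_mem_erase hh).symm
    exact notMem_empty x (hgh ▸ mem_inter.2 ⟨hxg, (mem_inter.1 hx).2⟩)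
  have := hmax.2 _ (hM'.insert hcf hdf)
  rw [card_insert_of_col_notMem hcf, card_insert_of_col_notMem hc₀, card_erase_of_mem hg] at this
  have := card_pos.2 ⟨g, hg⟩
  omega

/-- All edges of colour `c(g)` avoiding `V(M)` pass through the endpoint of `f₀` outside `V(M)`. -/
lemma card_filter_disjoint_le_one [Fintype E] (hmax : IsMaximumRainbowMatching fst snd col M)
    (hcol : IsProperColouring fst snd col) {g f₀ : E} {u : V} (hg : g ∈ M)
    (hu : u ∈ endpts fst snd g) (hf₀ : IsExternal fst snd M f₀) (hf₀c : col f₀ ∉ mCols col M)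
    (hu₀ : u ∈ endpts fst snd f₀) :
    #{e | col e = col g ∧ Disjoint (endpts fst snd e) (mVerts fst snd M)} ≤ 1 := by
  obtain ⟨x, y, hxy, hx, hy⟩ := hf₀.exists_endpts_eq
  have huM := endpts_subset_mVerts hg hu
  have hux : u = x := by
    rw [hxy, mem_insert, mem_singleton] at hu₀
    exact hu₀.resolve_right fun h => hy (h ▸ huM)
  have hfg : endpts fst snd f₀ ∩ mVerts fst snd M ⊆ endpts fst snd g := by
    intro z hz
    rw [mem_inter, hxy, mem_insert, mem_singleton] at hz
    obtain ⟨rfl | rfl, hzM⟩ := hz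
    · exact hux ▸ hu
    · exact absurd hzM hy
  refine hcol.card_le_one_of_mem_endpts y (col g) fun e he => ?_
  obtain ⟨hec, hed⟩ := (mem_filter.1 he).2
  obtain ⟨z, hz⟩ := hmax.inter_nonempty_of_swap hg hec hed hf₀c hfg
  obtain ⟨hzf, hze⟩ := mem_inter.1 hz
  rw [hxy, mem_insert, mem_singleton] at hzf
  obtain rfl | rfl := hzf
  · exact absurd hx (disjoint_left.1 hed hze)
  · exact ⟨hec, hze⟩

end IsMaximumRainbowMatching

end Matching

lemma Finset.sum_le_card_filter_mul_add {ι : Type*} (s : Finset ι) (f : ι → ℝ) {B t : ℝ}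
    (ht : 0 ≤ t) (hB : ∀ i ∈ s, f i ≤ B) :
    ∑ i ∈ s, f i ≤ #{i ∈ s | t ≤ f i} * B + #s * t := by
  rw [← sum_filter_add_sum_filter_not s (t ≤ f ·)]
  have hheavy := sum_le_card_nsmul {i ∈ s | t ≤ f i} f B fun i hi => hB i (mem_filter.1 hi).1
  have hlight := sum_le_card_nsmul {i ∈ s | ¬ t ≤ f i} f t fun i hi =>
    (not_le.1 (mem_filter.1 hi).2).le
  have hcard : (#{i ∈ s | ¬ t ≤ f i} : ℝ) ≤ #s := by exact_mod_cast card_filter_le _ _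
  rw [nsmul_eq_mul] at hheavy hlight
  nlinarith

section Counting

variable {V E C : Type*} [DecidableEq V] [Fintype E] [DecidableEq C] {fst snd : E → V}
  {col : E → C} {M : Finset E}

lemma mul_le_card_filter_col_mem (P : E → Prop) [DecidablePred P] (D : Finset C) {L : ℝ}
    (hL : ∀ c ∈ D, L ≤ #{e | P e ∧ col e = c}) : #D * L ≤ #{e | P e ∧ col e ∈ D} := by
  rw [card_eq_sum_card_fiberwise (f := col) (t := D) fun e he => (mem_filter.1 he).2.2,
    Nat.cast_sum, ← nsmul_eq_mul]
  refine card_nsmul_le_sum _ _ _ fun c hc => (hL c hc).trans ?_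
  refine Nat.cast_le.2 (card_le_card fun e he => ?_)
  simp only [mem_filter, mem_univ, true_and] at he ⊢
  exact ⟨⟨he.1, he.2 ▸ hc⟩, he.2⟩

/-- Double counting the edges `{e | P e ∧ col e ∈ D}` at their endpoints in `V(M)`, splitting the
vertices into those with `d v ≥ α|D|` (at most `|D|` edges each) and the others. -/
lemma le_two_mul_card_filter_add (M : Finset E) (P : E → Prop) [DecidablePred P]
    (D : Finset C) (d : V → ℕ) {L α : ℝ} (hα : 0 ≤ α) (hD : 0 < #D)
    (hP : ∀ e, P e → ∃ v ∈ mVerts fst snd M, v ∈ endpts fst snd e)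
    (hd : ∀ v, #{e | P e ∧ col e ∈ D ∧ v ∈ endpts fst snd e} ≤ d v) (hdD : ∀ v, d v ≤ #D)
    (hL : ∀ c ∈ D, L ≤ #{e | P e ∧ col e = c}) :
    L ≤ 2 * #{e ∈ M | ∃ v ∈ endpts fst snd e, α * #D ≤ d v} + 2 * α * #M := by
  set X : Finset E := {e | P e ∧ col e ∈ D}
  set T := mVerts fst snd M
  have hXT : #X ≤ ∑ v ∈ T, d v := by
    have hsub : X ⊆ T.biUnion fun v => {e ∈ X | v ∈ endpts fst snd e} := fun e he => by
      obtain ⟨v, hvT, hv⟩ := hP e (mem_filter.1 he).2.1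
      exact mem_biUnion.2 ⟨v, hvT, mem_filter.2 ⟨he, hv⟩⟩
    refine (card_le_card hsub).trans (card_biUnion_le.trans (sum_le_sum fun v _ => ?_))
    simpa only [X, filter_filter, and_assoc] using hd v
  have hsum := sum_le_card_filter_mul_add T (fun v => (d v : ℝ)) (mul_nonneg hα (#D).cast_nonneg)
    fun v _ => (Nat.cast_le.2 (hdD v))
  have hheavy : (#{v ∈ T | α * #D ≤ (d v : ℝ)} : ℝ) ≤
      2 * #{e ∈ M | ∃ v ∈ endpts fst snd e, α * #D ≤ d v} := by
    exact_mod_cast card_filter_mVerts_le M _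
  have hT : (#T : ℝ) ≤ 2 * #M := by exact_mod_cast card_mVerts_le M
  have hDL := mul_le_card_filter_col_mem P D hL
  have hXT' : (#X : ℝ) ≤ ∑ v ∈ T, (d v : ℝ) := by exact_mod_cast hXT
  have hD' : (0 : ℝ) < #D := by exact_mod_cast hD
  refine le_of_mul_le_mul_left ?_ hD'
  nlinarith [mul_nonneg hα hD'.le]

lemma card_filter_col_eq_le (hcol : IsProperColouring fst snd col)
    (hloop : ∀ e : E, fst e ≠ snd e) (M : Finset E) (c : C) :
    #{e | col e = c} ≤ #M + #{e | IsExternal fst snd M e ∧ col e = c} +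
      #{e | col e = c ∧ Disjoint (endpts fst snd e) (mVerts fst snd M)} := by
  have hsub : ({e | col e = c} : Finset E) ⊆
      (({e | col e = c ∧ endpts fst snd e ⊆ mVerts fst snd M} : Finset E) ∪
        ({e | IsExternal fst snd M e ∧ col e = c} : Finset E)) ∪
      ({e | col e = c ∧ Disjoint (endpts fst snd e) (mVerts fst snd M)} : Finset E) := by
    intro e he
    have hc := (mem_filter.1 he).2
    simp only [mem_union, mem_filter, mem_univ, true_and]
    by_cases h₁ : fst e ∈ mVerts fst snd M <;> by_cases h₂ : snd e ∈ mVerts fst snd M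
    · exact .inl (.inl ⟨hc, fun x hx => by rcases mem_endpts.1 hx with rfl | rfl <;> assumption⟩)
    · exact .inl (.inr ⟨.inl ⟨h₁, h₂⟩, hc⟩)
    · exact .inl (.inr ⟨.inr ⟨h₁, h₂⟩, hc⟩)
    · exact .inr ⟨hc, disjoint_left.2 fun x hx => by
        rcases mem_endpts.1 hx with rfl | rfl <;> assumption⟩
  have := hcol.card_filter_subset_mVerts_le hloop M c
  have := (card_le_card hsub).trans <|
    (card_union_le _ _).trans (Nat.add_le_add_right (card_union_le _ _) _)
  omega

end Counting

section Flexible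

variable {V E C : Type*} [DecidableEq V] [Fintype E] [Fintype C] [DecidableEq C]
  {fst snd : E → V} {col : E → C} {M : Finset E}

lemma E0_subset {α : ℝ} : E0 fst snd col M α ⊆ M := filter_subset _ _

lemma E1_subset {α : ℝ} : E1 fst snd col M α ⊆ M := filter_subset _ _

lemma extC0deg_le (hcol : IsProperColouring fst snd col) (v : V) :
    extC0deg fst snd col M v ≤ #(C0 col M) :=
  hcol.card_le_of_mem_endpts v fun _ he => ⟨(mem_filter.1 he).2.2.1, (mem_filter.1 he).2.2.2⟩

lemma goodDeg_le (hcol : IsProperColouring fst snd col) (α : ℝ) (v : V) :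
    goodDeg fst snd col M α v ≤ #(Fcols fst snd col M α) :=
  hcol.card_le_of_mem_endpts v fun _ he => ⟨(mem_filter.1 he).2.1.2.1, (mem_filter.1 he).2.2⟩

namespace IsMaximumRainbowMatching

lemma sub_le_card_filter_isExternal (hmax : IsMaximumRainbowMatching fst snd col M)
    (hcol : IsProperColouring fst snd col) (hloop : ∀ e : E, fst e ≠ snd e) {c : C}
    (hc : c ∈ C0 col M) :
    (#{e | col e = c} : ℝ) - #M ≤ #{e | IsExternal fst snd M e ∧ col e = c} := by
  have hempty : ({e | col e = c ∧ Disjoint (endpts fst snd e) (mVerts fst snd M)} : Finset E)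
      = ∅ :=
    filter_eq_empty_iff.2 fun _ _ ⟨hec, hd⟩ => hmax.not_disjoint_mVerts (hec ▸ mem_C0.1 hc) hd
  have := card_filter_col_eq_le hcol hloop M c
  rw [hempty, card_empty, add_zero] at this
  rw [sub_le_iff_le_add']
  exact_mod_cast this

lemma card_filter_col_eq_le_of_mem_E0 (hmax : IsMaximumRainbowMatching fst snd col M)
    (hcol : IsProperColouring fst snd col) (hloop : ∀ e : E, fst e ≠ snd e) {α : ℝ}
    (hαN : 0 < α * #(C0 col M)) {g : E} (hg : g ∈ E0 fst snd col M α) :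
    #{e | col e = col g} ≤ #M + #{e | IsExternal fst snd M e ∧ col e = col g} + 1 := by
  obtain ⟨hgM, u, hu, hdeg⟩ := mem_filter.1 hg
  obtain ⟨f₀, hf₀⟩ : ({f | IsExternal fst snd M f ∧ col f ∈ C0 col M ∧
      u ∈ endpts fst snd f} : Finset E).Nonempty :=
    card_pos.1 (by exact_mod_cast hαN.trans_le hdeg)
  obtain ⟨hf₀e, hf₀c, hu₀⟩ := (mem_filter.1 hf₀).2
  have := hmax.card_filter_disjoint_le_one hcol hgM hu hf₀e (mem_C0.1 hf₀c) hu₀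
  have := card_filter_col_eq_le hcol hloop M (col g)
  omega

end IsMaximumRainbowMatching

/-- Fix the tail `u` of `g ∈ E₀`. A bad edge of colour `c(g)` meets at least `α|C₀|/2` of the
`≥ α|C₀|` external `C₀`-edges at `u`, each of which meets at most two edges of colour `c(g)`. -/
lemma card_filter_not_isGood_mul_le (hcol : IsProperColouring fst snd col) {α : ℝ} {g : E}
    (hg : g ∈ E0 fst snd col M α) :
    #{e | IsExternal fst snd M e ∧ col e = col g ∧ ¬ IsGood fst snd col M α e} *
      (α * #(C0 col M) / 2) ≤ (#(C0 col M) * 2 : ℝ) := by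
  obtain ⟨hgM, u, hu, hdeg⟩ := mem_filter.1 hg
  set Du : Finset E := {f | IsExternal fst snd M f ∧ col f ∈ C0 col M ∧ u ∈ endpts fst snd f}
  have hDu : (#Du : ℝ) ≤ #(C0 col M) := by exact_mod_cast extC0deg_le hcol u
  have hcount := card_nsmul_le_card_nsmul (R := ℝ)
    (fun e f => (endpts fst snd f ∩ endpts fst snd e).Nonempty) (t := Du)
    (s := {e | IsExternal fst snd M e ∧ col e = col g ∧ ¬ IsGood fst snd col M α e})
    (m := α * #(C0 col M) / 2) (n := 2) ?_ ?_
  · rw [nsmul_eq_mul, nsmul_eq_mul] at hcount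
    linarith
  · intro e he
    obtain ⟨he, hec, hng⟩ := (mem_filter.1 he).2
    have hfew : (#{f | IsExternal fst snd M f ∧ col f ∈ C0 col M ∧
        (endpts fst snd f ∩ endpts fst snd g).Nonempty ∧
        endpts fst snd f ∩ endpts fst snd e = ∅} : ℝ) < α * #(C0 col M) / 2 :=
      lt_of_not_ge fun h => hng ⟨he, hec ▸ mem_mCols_of_mem hg, g, hgM, hec.symm, h⟩
    have hsplit := card_filter_add_card_filter_not (s := Du)
      (p := fun f => (endpts fst snd f ∩ endpts fst snd e).Nonempty)
    have hsub : {f ∈ Du | ¬ (endpts fst snd f ∩ endpts fst snd e).Nonempty} ⊆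
        ({f | IsExternal fst snd M f ∧ col f ∈ C0 col M ∧
          (endpts fst snd f ∩ endpts fst snd g).Nonempty ∧
          endpts fst snd f ∩ endpts fst snd e = ∅} : Finset E) := fun f hf => by
      obtain ⟨hfDu, hfe⟩ := mem_filter.1 hf
      obtain ⟨hfx, hfc, huf⟩ := (mem_filter.1 hfDu).2
      exact mem_filter.2 ⟨mem_univ f, hfx, hfc, ⟨u, mem_inter.2 ⟨huf, hu⟩⟩,
        not_nonempty_iff_eq_empty.1 hfe⟩
    have hsub' : (#{f ∈ Du | ¬ (endpts fst snd f ∩ endpts fst snd e).Nonempty} : ℝ) ≤ _ :=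
      Nat.cast_le.2 (card_le_card hsub)
    have hsplit' : (#{f ∈ Du | (endpts fst snd f ∩ endpts fst snd e).Nonempty} : ℝ) +
        #{f ∈ Du | ¬ (endpts fst snd f ∩ endpts fst snd e).Nonempty} = #Du := by
      exact_mod_cast hsplit
    have hdeg' : α * #(C0 col M) ≤ #Du := hdeg
    simp only [bipartiteAbove]
    linarith
  · intro f _
    refine Nat.cast_le.2 (hcol.card_le_two_of_meet f (col g) fun e he => ?_) |>.trans_eq
      (by norm_num)
    obtain ⟨he, hr⟩ := mem_filter.1 he
    exact ⟨(mem_filter.1 he).2.2.1, by rwa [inter_comm]⟩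

lemma IsMaximumRainbowMatching.sub_le_card_filter_isGood
    (hmax : IsMaximumRainbowMatching fst snd col M) (hcol : IsProperColouring fst snd col)
    (hloop : ∀ e : E, fst e ≠ snd e) {α : ℝ} (hα : 0 < α) (hN : 0 < #(C0 col M)) {c : C}
    (hc : c ∈ Fcols fst snd col M α) :
    (#{e | col e = c} : ℝ) - #M - 1 - 4 / α ≤ #{e | IsGood fst snd col M α e ∧ col e = c} := by
  obtain ⟨g, hg, rfl⟩ := mem_image.1 hc
  have hN' : (0 : ℝ) < #(C0 col M) := by exact_mod_cast hN
  have hclass := hmax.card_filter_col_eq_le_of_mem_E0 hcol hloop (mul_pos hα hN') hg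
  have hsub : ({e | IsExternal fst snd M e ∧ col e = col g} : Finset E) ⊆
      ({e | IsGood fst snd col M α e ∧ col e = col g} : Finset E) ∪
        ({e | IsExternal fst snd M e ∧ col e = col g ∧ ¬ IsGood fst snd col M α e} : Finset E) := by
    intro e he
    obtain ⟨hx, hc⟩ := (mem_filter.1 he).2
    by_cases hgood : IsGood fst snd col M α e
    · exact mem_union_left _ (mem_filter.2 ⟨mem_univ e, hgood, hc⟩)
    · exact mem_union_right _ (mem_filter.2 ⟨mem_univ e, hx, hc, hgood⟩)
  have hext := (card_le_card hsub).trans (card_union_le _ _)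
  have hbad := card_filter_not_isGood_mul_le hcol hg
  have hbad' : (#{e | IsExternal fst snd M e ∧ col e = col g ∧
      ¬ IsGood fst snd col M α e} : ℝ) ≤ 4 / α := by
    rw [le_div_iff₀ hα]
    nlinarith
  have hclass' : (#{e | col e = col g} : ℝ) ≤
      #M + #{e | IsExternal fst snd M e ∧ col e = col g} + 1 := by exact_mod_cast hclass
  have hext' : (#{e | IsExternal fst snd M e ∧ col e = col g} : ℝ) ≤
      #{e | IsGood fst snd col M α e ∧ col e = col g} +
        #{e | IsExternal fst snd M e ∧ col e = col g ∧ ¬ IsGood fst snd col M α e} := by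
    exact_mod_cast hext
  linarith

end Flexible

lemma div_sq_le_two_rpow_sq {ε : ℝ} (hε : 0 < ε) : 169 / ε ^ 2 ≤ ((2 : ℝ) ^ (20 / ε)) ^ 2 := by
  have hlog : 13 / ε ≤ Real.log 2 * (20 / ε) := by
    rw [← mul_div_assoc]
    exact div_le_div_of_nonneg_right (by linarith [Real.log_two_gt_d9]) hε.le
  have h13 : 13 / ε ≤ (2 : ℝ) ^ (20 / ε) := by
    rw [Real.rpow_def_of_pos two_pos]
    linarith [Real.add_one_le_exp (Real.log 2 * (20 / ε))]
  calc 169 / ε ^ 2 = (13 / ε) ^ 2 := by rw [div_pow]; norm_num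
    _ ≤ _ := pow_le_pow_left₀ (by positivity) h13 2

lemma one_add_div_le {ε n : ℝ} (hε0 : 0 < ε) (hε1 : ε < 1 / 1000) (hn : 169 / ε ^ 2 ≤ n) :
    1 + 4 / (ε / 12) ≤ 8 * (ε / 12) * n := by
  rw [div_le_iff₀ (by positivity)] at hn
  rw [div_div_eq_mul_div, one_add_div hε0.ne', div_le_iff₀ hε0]
  nlinarith

theorem stmt8_general
    {V E C : Type*} [DecidableEq V] [Fintype E]
    [Fintype C] [DecidableEq C]
    (ε k α : ℝ) (hε0 : 0 < ε) (hε1 : ε < 1/1000)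
    (hk : k = (2:ℝ) ^ (20/ε)) (hα : α = ε/12)
    (n : ℕ) (hn : (n:ℝ) > k^2)
    (fst snd : E → V) (col : E → C)
    (hloop : ∀ e : E, fst e ≠ snd e)
    (hproper : ∀ e f : E, e ≠ f → (endpts fst snd e ∩ endpts fst snd f).Nonempty →
      col e ≠ col f)
    (hC : Fintype.card C = n)
    (habund : ∀ c : C, (1+ε) * n ≤ ((Finset.univ.filter fun e : E => col e = c).card : ℝ))
    (M : Finset E) (hM : IsRainbowMatching fst snd col M)
    (hMmax : ∀ S : Finset E, IsRainbowMatching fst snd col S → S.card ≤ M.card)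
    (hMlt : (M.card : ℝ) < n - k)
    :
    α * n ≤ (((E1 fst snd col M α).image col).card : ℝ) := by
  have hcol : IsProperColouring fst snd col := hproper
  have hmax : IsMaximumRainbowMatching fst snd col M := ⟨hM, hMmax⟩
  have hα0 : 0 < α := by rw [hα]; positivity
  have hk0 : 0 < k := by rw [hk]; positivity
  have hnε : 169 / ε ^ 2 ≤ n := (hk ▸ div_sq_le_two_rpow_sq hε0).trans hn.le
  have hN : (#(C0 col M) : ℝ) = n - #M := by
    rw [← hC, ← hM.card_C0_add]; push_cast; ring
  have hN0 : 0 < #(C0 col M) := by exact_mod_cast (show (0 : ℝ) < #(C0 col M) by linarith)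
  have hE0 : (1 + ε) * n - #M ≤ 2 * #(E0 fst snd col M α) + 2 * α * #M :=
    le_two_mul_card_filter_add M (IsExternal fst snd M) (C0 col M) (extC0deg fst snd col M)
      hα0.le hN0 (fun _ he => he.exists_mem_mVerts) (fun _ => le_rfl) (extC0deg_le hcol)
      fun c hc => le_trans (by gcongr; exact habund c)
        (hmax.sub_le_card_filter_isExternal hcol hloop hc)
  have hF : 0 < #(Fcols fst snd col M α) := by
    rw [Fcols, (hM.subset E0_subset).card_mCols]
    exact_mod_cast (show (0 : ℝ) < #(E0 fst snd col M α) by nlinarith)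
  have hE1 : (1 + ε) * n - #M - 1 - 4 / α ≤ 2 * #(E1 fst snd col M α) + 2 * α * #M :=
    le_two_mul_card_filter_add M (IsGood fst snd col M α) (Fcols fst snd col M α)
      (goodDeg fst snd col M α) hα0.le hF (fun _ he => he.1.exists_mem_mVerts)
      (fun _ => card_le_card fun e he => mem_filter.2
        ⟨mem_univ e, (mem_filter.1 he).2.1, (mem_filter.1 he).2.2.2⟩)
      (goodDeg_le hcol α) fun c hc => le_trans (by gcongr; exact habund c)
        (hmax.sub_le_card_filter_isGood hcol hloop hα0 hN0 hc)
  rw [show #((E1 fst snd col M α).image col) = #(E1 fst snd col M α) from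
    (hM.subset E1_subset).card_mCols]
  subst hα
  nlinarith [one_add_div_le hε0 hε1 hnε]

/-- **Lemma 3.2.** The set `R₁` of colours of the edges of `E₁` satisfies
`|R₁| ≥ αn`. -/
theorem stmt8
    {V E C : Type*} [Fintype V] [DecidableEq V] [Fintype E] [DecidableEq E]
    [Fintype C] [DecidableEq C]
    (ε k α : ℝ) (hε0 : 0 < ε) (hε1 : ε < 1/1000)
    (hk : k = (2:ℝ) ^ (20/ε)) (hα : α = ε/12)
    (n : ℕ) (hn : (n:ℝ) > k^2)
    (fst snd : E → V) (col : E → C)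
    (hloop : ∀ e : E, fst e ≠ snd e)
    (hproper : ∀ e f : E, e ≠ f → (endpts fst snd e ∩ endpts fst snd f).Nonempty →
      col e ≠ col f)
    (hC : Fintype.card C = n)
    (hmult : ∀ u v : V,
      ((Finset.univ.filter fun e : E => endpts fst snd e = ({u, v} : Finset V)).card : ℝ) ≤ n / k)
    (habund : ∀ c : C, (1+ε) * n ≤ ((Finset.univ.filter fun e : E => col e = c).card : ℝ))
    (M : Finset E) (hM : IsRainbowMatching fst snd col M)
    (hMmax : ∀ S : Finset E, IsRainbowMatching fst snd col S → S.card ≤ M.card)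
    (hMlt : (M.card : ℝ) < n - k)
    :
    α * n ≤ (((E1 fst snd col M α).image col).card : ℝ) :=
  stmt8_general ε k α hε0 hε1 hk hα n hn fst snd col hloop hproper hC habund M hM hMmax hMlt
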